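/- Let X be a shift space over a finite alphabet A and let a, b ∈ A with a ≠ b. Suppose that for every point x ∈ X and every i ∈ ℤ, x_i = a implies x_{i+1} = b. Then X is flow equivalent to X^{ab↦a}, the shift space obtained by replacing every occurrence of the two-letter word ab by the single letter a in every point of X and closing the resulting set under the shift map. -/

import Mathlib

open Filter

namespace SymbDyn

/-- A point of a (full) shift: a bi-infinite sequence of symbols, where symbols
are drawn from the universal symbol set `ℕ`. -/
abbrev Point : Type := ℤ → ℕ

/-- The shift map `σ`, with `σ(x) i = x (i + 1)`. -/
def shift (x : Point) : Point := fun i => x (i + 1)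

/-- The word `w` occurs in `x` starting at position `i`. -/
def MatchesAt (w : List ℕ) (x : Point) (i : ℤ) : Prop :=
  ∀ j : Fin w.length, x (i + ((j : ℕ) : ℤ)) = w.get j

/-- The word `w` occurs (as a factor) somewhere in the point `x`. -/
def occursIn (w : List ℕ) (x : Point) : Prop := ∃ i : ℤ, MatchesAt w x i

/-- All points over the alphabet `A` in which no word of `F` occurs. -/
def XF (A : Set ℕ) (F : Set (List ℕ)) : Set Point :=
  { x | (∀ i, x i ∈ A) ∧ ∀ w ∈ F, ¬ occursIn w x }

/-- A shift space: a set of the form `X_F` over some finite alphabet. -/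
def IsShiftSpace (X : Set Point) : Prop :=
  ∃ A : Set ℕ, A.Finite ∧ ∃ F : Set (List ℕ), X = XF A F

/-- A shift of finite type: `X_F` for a finite set `F` of forbidden words. -/
def IsSFT (X : Set Point) : Prop :=
  ∃ A : Set ℕ, A.Finite ∧ ∃ F : Set (List ℕ), F.Finite ∧ X = XF A F

/-- The language `B(X)` of a shift space `X`. -/
def language (X : Set Point) : Set (List ℕ) := { w | ∃ x ∈ X, occursIn w x }

/-- The words of length `n` in the language of `X`, i.e. `B_n(X)`. -/
def Bn (X : Set Point) (n : ℕ) : Set (List ℕ) := { w ∈ language X | w.length = n }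

/-- The set of symbols actually occurring in points of `X`. -/
def alphabet (X : Set Point) : Set ℕ := { a | ∃ x ∈ X, ∃ i : ℤ, x i = a }

/-- `φ` is a sliding block code from `X` to `Y`: it maps `X` into `Y` and there are
`m, n` and a block map `Φ` with `φ(x) i = Φ (x (i - m) … x (i + n))` on `X`. -/
def IsSlidingBlockCode (X Y : Set Point) (φ : Point → Point) : Prop :=
  Set.MapsTo φ X Y ∧
    ∃ (m n : ℕ) (Φ : List ℕ → ℕ), ∀ x ∈ X, ∀ i : ℤ,
      φ x i = Φ (List.ofFn fun j : Fin (m + n + 1) => x (i - (m : ℤ) + ((j : ℕ) : ℤ)))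

/-- `X` and `Y` are conjugate: there is a bijective sliding block code from `X` onto `Y`. -/
def Conjugate (X Y : Set Point) : Prop :=
  ∃ φ : Point → Point, IsSlidingBlockCode X Y φ ∧ Set.BijOn φ X Y

/-- A sofic shift: the image of a shift of finite type under a surjective sliding
block code. -/
def IsSofic (X : Set Point) : Prop :=
  ∃ Z : Set Point, IsSFT Z ∧ ∃ φ : Point → Point,
    IsSlidingBlockCode Z X φ ∧ Set.SurjOn φ Z X

/-- `y` is obtained from `x` by replacing every occurrence of the word `u` by the
word `v` (up to an overall shift).  Here `s k` enumerates, in order, the starting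
positions of the blocks of `x` (each block being either an occurrence of `u`, all
occurrences of `u` being blocks, or a single letter), and `t k` is the starting
position in `y` of the block corresponding to block `k` of `x`. -/
def ReplacedBy (u v : List ℕ) (x y : Point) : Prop :=
  u ≠ [] ∧
    ∃ s t : ℤ → ℤ,
      (∀ i : ℤ, MatchesAt u x i → ∃ k, s k = i) ∧
      (∀ m : ℤ, ∃ k, t k ≤ m ∧ m < t (k + 1)) ∧
      ∀ k : ℤ,
        (MatchesAt u x (s k) →
          s (k + 1) = s k + (u.length : ℤ) ∧ t (k + 1) = t k + (v.length : ℤ) ∧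
            ∀ j : Fin v.length, y (t k + ((j : ℕ) : ℤ)) = v.get j) ∧
        (¬ MatchesAt u x (s k) →
          s (k + 1) = s k + 1 ∧ t (k + 1) = t k + 1 ∧ y (t k) = x (s k))

/-- `X^{u ↦ v}`: the set obtained from `X` by replacing every occurrence of the
word `u` by the word `v` in every point, closed under the shift map. -/
def ReplaceWord (u v : List ℕ) (X : Set Point) : Set Point :=
  { y | ∃ x ∈ X, ReplacedBy u v x y }

/-- `Y` is a symbol expansion `X^{a ↦ a◊}` of `X`, for a letter `a` of `X` and a
symbol `◊` not in the alphabet of `X`. -/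
def IsSymbolExpansionOf (Y X : Set Point) : Prop :=
  ∃ a dia : ℕ, a ∈ alphabet X ∧ dia ∉ alphabet X ∧ Y = ReplaceWord [a] [a, dia] X

/-- One step of the Parry–Sullivan chain: both sets are shift spaces, and they are
conjugate or one is a symbol expansion of the other. -/
def FEStep (X Y : Set Point) : Prop :=
  IsShiftSpace X ∧ IsShiftSpace Y ∧
    (Conjugate X Y ∨ Conjugate Y X ∨ IsSymbolExpansionOf Y X ∨ IsSymbolExpansionOf X Y)

/-- Flow equivalence (Parry–Sullivan): a finite chain of conjugacies and symbol
expansions/contractions. -/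
def FlowEquiv (X Y : Set Point) : Prop := Relation.ReflTransGen FEStep X Y

/-- The entropy `h(X) = lim_{n→∞} (1/n) log₂ |B_n(X)|` of a shift space
(stated via `limsup`; for shift spaces the limit exists). -/
noncomputable def entropy (X : Set Point) : ℝ :=
  Filter.limsup (fun n : ℕ => Real.logb 2 ((Bn X n).ncard : ℝ) / (n : ℝ)) Filter.atTop

/-- `h([X])`: the set of entropies of shift spaces flow equivalent to `X`. -/
def entropySet (X : Set Point) : Set ℝ :=
  { r | ∃ Y : Set Point, IsShiftSpace Y ∧ FlowEquiv Y X ∧ entropy Y = r }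

/-- A set of reals is dense in `ℝ⁺`. -/
def DenseInPos (s : Set ℝ) : Prop :=
  ∀ r : ℝ, 0 < r → ∀ ε : ℝ, 0 < ε → ∃ e ∈ s, |e - r| < ε

/-- `X` is irreducible: any two words of the language can be joined inside it. -/
def IrreducibleShift (X : Set Point) : Prop :=
  ∀ u ∈ language X, ∀ v ∈ language X, ∃ w : List ℕ, u ++ w ++ v ∈ language X

/-- `w` is intrinsically synchronising for `X`. -/
def IntrinsicallySynchronising (X : Set Point) (w : List ℕ) : Prop :=
  ∀ v u : List ℕ, v ++ w ∈ language X → w ++ u ∈ language X →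
    v ++ w ++ u ∈ language X

/-- `X` admits non-trivial `w`-overlaps: there is a word `v` in the language of `X`
with `|w| < |v| < 2|w|` having `w` both as a prefix and as a suffix. -/
def AdmitsNontrivialOverlaps (X : Set Point) (w : List ℕ) : Prop :=
  ∃ v ∈ language X, w.length < v.length ∧ v.length < 2 * w.length ∧ w <+: v ∧ w <:+ v

/-- The full shift over the alphabet `A`. -/
def fullShift (A : Set ℕ) : Set Point := { x | ∀ i, x i ∈ A }

/-- The word `1 0^k 1`. -/
def gapWord (k : ℕ) : List ℕ := 1 :: (List.replicate k 0 ++ [1])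

open Classical in
/-- The forbidden words of the `S`-gap shift. -/
noncomputable def sGapForbidden (S : Set ℕ) : Set (List ℕ) :=
  if S.Finite then
    { w | ∃ k : ℕ, k ∉ S ∧ k < sSup S ∧ w = gapWord k } ∪ {List.replicate (1 + sSup S) 0}
  else
    { w | ∃ k : ℕ, k ∉ S ∧ w = gapWord k }

/-- The `S`-gap shift `X(S)` over the alphabet `{0, 1}`. -/
noncomputable def sGapShift (S : Set ℕ) : Set Point :=
  XF {0, 1} (sGapForbidden S)


/-! ### Auxiliary lemmas -/

section Aux

lemma matchesAt_single {c : ℕ} {x : Point} {i : ℤ} : MatchesAt [c] x i ↔ x i = c := by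
  constructor
  · intro hm; simpa using hm ⟨0, by norm_num⟩
  · intro hc j; fin_cases j; simpa

lemma matchesAt_pair {c d : ℕ} {x : Point} {i : ℤ} :
    MatchesAt [c, d] x i ↔ x i = c ∧ x (i + 1) = d := by
  constructor
  · intro hm; exact ⟨by simpa using hm ⟨0, by norm_num⟩, by simpa using hm ⟨1, by norm_num⟩⟩
  · rintro ⟨h0, h1⟩ j
    fin_cases j
    · simpa
    · simpa

lemma zseq {α : Type*} (f g : α → α) (P : α → Prop)
    (hf : ∀ y, P y → P (f y)) (hg : ∀ y, P y → P (g y))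
    (hfg : ∀ y, P y → f (g y) = y) (x0 : α) (h0 : P x0) :
    ∃ u : ℤ → α, u 0 = x0 ∧ (∀ k, P (u k)) ∧ ∀ k, u (k + 1) = f (u k) := by
  have hfn : ∀ n : ℕ, P (f^[n] x0) := by
    intro n; induction n with
    | zero => simpa
    | succ n ih => rw [Function.iterate_succ_apply']; exact hf _ ih
  have hgn : ∀ n : ℕ, P (g^[n] x0) := by
    intro n; induction n with
    | zero => simpa
    | succ n ih => rw [Function.iterate_succ_apply']; exact hg _ ih
  refine ⟨fun k => if 0 ≤ k then f^[k.toNat] x0 else g^[(-k).toNat] x0, by norm_num, ?_, ?_⟩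
  · intro k
    by_cases hk : 0 ≤ k
    · simpa [hk] using hfn k.toNat
    · simpa [hk] using hgn (-k).toNat
  · intro k
    rcases lt_trichotomy k (-1) with hk | hk | hk
    · have h1 : ¬ (0 ≤ k) := by omega
      have h2 : ¬ (0 ≤ k + 1) := by omega
      have h3 : (-k).toNat = (-(k+1)).toNat + 1 := by omega
      simp only [h1, h2, if_false, h3, Function.iterate_succ_apply']
      exact (hfg _ (hgn _)).symm
    · subst hk
      simp only [show ¬ (0 ≤ (-1:ℤ)) by norm_num, if_false, show ((-1:ℤ)+1) = 0 by ring]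
      simp only [show (0:ℤ) ≤ 0 by norm_num, if_true]
      rw [show (-(-1:ℤ)).toNat = 1 by norm_num]
      simpa using (hfg x0 h0).symm
    · have h1 : 0 ≤ k := by omega
      have h2 : 0 ≤ k + 1 := by omega
      have h3 : (k+1).toNat = k.toNat + 1 := by omega
      simp only [h1, h2, if_true, h3, Function.iterate_succ_apply']

lemma zcover (u : ℤ → ℤ) (hu : ∀ k, u k < u (k + 1)) (m : ℤ) :
    ∃ k, u k ≤ m ∧ m < u (k + 1) := by
  have hsm : StrictMono u := strictMono_int_of_lt_succ hu
  have hdn : ∀ n : ℕ, u (-(n:ℤ)) ≤ u 0 - n := by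
    intro n; induction n with
    | zero => simp
    | succ n ih =>
      have h1 : u (-(n:ℤ) - 1) < u (-(n:ℤ)) := by
        have := hu (-(n:ℤ) - 1); simpa using this
      have hrw : (-((n+1 : ℕ):ℤ)) = -(n:ℤ) - 1 := by push_cast; ring
      rw [hrw]; push_cast; omega
  have hup : ∀ n : ℕ, u 0 + n ≤ u n := by
    intro n; induction n with
    | zero => simp
    | succ n ih =>
      have := hu (n : ℤ); push_cast; omega
  have Hinh : ∃ k : ℤ, u k ≤ m := by
    refine ⟨-(((u 0 - m).toNat : ℤ)), ?_⟩
    have := hdn (u 0 - m).toNat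
    omega
  have Hbdd : ∃ b : ℤ, ∀ k : ℤ, u k ≤ m → k ≤ b := by
    refine ⟨max 0 (m - u 0), ?_⟩
    intro k hk
    rcases le_or_gt 0 k with hk0 | hk0
    · have := hup k.toNat
      have hkt : ((k.toNat : ℤ)) = k := by omega
      rw [hkt] at this; omega
    · omega
  obtain ⟨lub, h1, h2⟩ := Int.exists_greatest_of_bdd Hbdd Hinh
  refine ⟨lub, h1, ?_⟩
  by_contra hc
  have := h2 (lub + 1) (by omega)
  omega

lemma zlinear (t : ℤ → ℤ) (ht : ∀ k, t (k + 1) = t k + 1) : ∀ k, t k = t 0 + k := by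
  intro k
  induction k using Int.induction_on with
  | zero => simp
  | succ n ih => rw [ht n, ih]; ring
  | pred n ih =>
    have := ht (-(n:ℤ) - 1)
    rw [show (-(n:ℤ) - 1 + 1) = -(n:ℤ) by ring] at this
    omega

lemma XF_translate {A : Set ℕ} {F : Set (List ℕ)} {x : Point} (hx : x ∈ XF A F) (c : ℤ) :
    (fun i => x (i + c)) ∈ XF A F := by
  refine ⟨fun i => hx.1 (i + c), ?_⟩
  intro w hw ⟨i, hm⟩
  refine hx.2 w hw ⟨i + c, ?_⟩
  intro j
  have := hm j
  simpa [add_right_comm] using this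

/-- The 2-block recoding map: rewrite the `b` of each `ab` into `dia`. -/
def phi (a b dia : ℕ) (x : Point) : Point :=
  fun i => if x (i - 1) = a ∧ x i = b then dia else x i

/-- Inverse recoding: rewrite each `dia` back into `b`. -/
def psi (b dia : ℕ) (z : Point) : Point :=
  fun i => if z i = dia then b else z i

lemma psi_phi {a b dia : ℕ} {x : Point} (hx : ∀ i, x i ≠ dia) :
    psi b dia (phi a b dia x) = x := by
  funext i
  unfold psi phi
  by_cases hc : x (i - 1) = a ∧ x i = b
  · simp [hc, hc.2]
  · simp only [if_neg hc]
    exact if_neg (hx i) |>.trans rfl |>.symm ▸ (by simp [hx i])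

/-- Canonical enumeration of the block starts of a point in which `a` is always
followed by `b`. -/
lemma exists_blockSeq {a b : ℕ} (hab : a ≠ b) (x : Point)
    (hx : ∀ i, x i = a → x (i + 1) = b) (i0 : ℤ) (hi0 : x (i0 - 1) ≠ a) :
    ∃ s : ℤ → ℤ, s 0 = i0 ∧ (∀ k, x (s k - 1) ≠ a) ∧
      ∀ k, s (k + 1) = if x (s k) = a then s k + 2 else s k + 1 := by
  classical
  obtain ⟨s, hs0, hsP, hsStep⟩ := zseq
    (fun i => if x i = a then i + 2 else i + 1)
    (fun i => if x (i - 2) = a then i - 2 else i - 1)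
    (fun i => x (i - 1) ≠ a)
    (by
      intro i hi
      by_cases hia : x i = a
      · have := hx i hia
        simp only [if_pos hia]
        rw [show i + 2 - 1 = i + 1 by ring]
        rw [this]; exact Ne.symm hab
      · simpa [hia] using hia)
    (by
      intro i hi
      by_cases hia : x (i - 2) = a
      · simp only [if_pos hia]
        intro hcon
        have := hx (i - 2 - 1) hcon
        rw [show i - 2 - 1 + 1 = i - 2 by ring] at this
        rw [this] at hia
        exact hab hia.symm
      · simp only [if_neg hia]
        rw [show i - 1 - 1 = i - 2 by ring]
        exact hia)
    (by
      intro i hi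
      by_cases hia : x (i - 2) = a
      · simp only [if_pos hia]; omega
      · simp only [if_neg hia, if_neg hi]; ring)
    i0 hi0
  exact ⟨s, hs0, hsP, fun k => by
    have := hsStep k
    by_cases hc : x (s k) = a <;> simp [hc] at this ⊢ <;> omega⟩

lemma blockSeq_lt {a : ℕ} {x : Point} {s : ℤ → ℤ}
    (hstep : ∀ k, s (k + 1) = if x (s k) = a then s k + 2 else s k + 1) :
    ∀ k, s k < s (k + 1) := by
  intro k; have := hstep k
  by_cases hc : x (s k) = a <;> simp [hc] at this <;> omega

/-- Every block start is hit by the canonical enumeration. -/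
lemma blockSeq_surj {a : ℕ} {x : Point} {s : ℤ → ℤ}
    (hstep : ∀ k, s (k + 1) = if x (s k) = a then s k + 2 else s k + 1)
    (i : ℤ) (hi : x (i - 1) ≠ a) : ∃ k, s k = i := by
  obtain ⟨k, hk1, hk2⟩ := zcover s (blockSeq_lt hstep) i
  refine ⟨k, ?_⟩
  have := hstep k
  by_cases hc : x (s k) = a
  · rw [if_pos hc] at this
    rcases (by omega : s k = i ∨ s k + 1 = i) with h | h
    · exact h
    · exact absurd (by rw [← h]; simpa using hc) hi
  · rw [if_neg hc] at this; omega

/-- Structure extracted from a contraction `ab ↦ a` of a point `x` where `a` is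
always followed by `b`. -/
lemma contraction_structure {a b : ℕ} (hab : a ≠ b) {x y : Point}
    (hx : ∀ i, x i = a → x (i + 1) = b)
    (hr : ReplacedBy [a, b] [a] x y) :
    ∃ s : ℤ → ℤ,
      (∀ k, s (k + 1) = if x (s k) = a then s k + 2 else s k + 1) ∧
      (∀ k, x (s k - 1) ≠ a) ∧
      ∃ c : ℤ, ∀ m : ℤ, y m = x (s (m - c)) := by
  obtain ⟨-, s, t, hmatch, hcov, hblk⟩ := hr
  have matchIff : ∀ i, MatchesAt [a, b] x i ↔ x i = a := by
    intro i
    rw [matchesAt_pair]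
    exact ⟨And.left, fun h' => ⟨h', hx i h'⟩⟩
  have hstep : ∀ k, s (k + 1) = if x (s k) = a then s k + 2 else s k + 1 := by
    intro k
    by_cases hM : x (s k) = a
    · rw [if_pos hM]
      have := ((hblk k).1 ((matchIff _).2 hM)).1
      simpa using this
    · rw [if_neg hM]
      exact ((hblk k).2 (fun hM' => hM ((matchIff _).1 hM'))).1
  have ht : ∀ k, t (k + 1) = t k + 1 := by
    intro k
    by_cases hM : MatchesAt [a, b] x (s k)
    · have := ((hblk k).1 hM).2.1; simpa using this
    · exact ((hblk k).2 hM).2.1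
  have htl := zlinear t ht
  have hyv : ∀ k, y (t k) = x (s k) := by
    intro k
    by_cases hM : MatchesAt [a, b] x (s k)
    · have hv := ((hblk k).1 hM).2.2 ⟨0, by norm_num⟩
      have hxa := (matchIff _).1 hM
      simpa [hxa] using hv
    · exact ((hblk k).2 hM).2.2
  have hsm : StrictMono s := strictMono_int_of_lt_succ (blockSeq_lt hstep)
  refine ⟨s, hstep, ?_, t 0, ?_⟩
  · intro k
    intro hcon
    have hM : MatchesAt [a, b] x (s k - 1) := by
      rw [matchesAt_pair]
      refine ⟨hcon, ?_⟩
      rw [show s k - 1 + 1 = s k by ring]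
      have := hx (s k - 1) hcon
      rw [show s k - 1 + 1 = s k by ring] at this
      exact this
    obtain ⟨k', hk'⟩ := hmatch _ hM
    have h2 : s (k' + 1) = s k + 1 := by
      have := hstep k'
      rw [hk'] at this
      rw [if_pos ((matchIff _).1 (hk' ▸ hM))] at this
      omega
    have hlt1 : k' < k := by
      have : s k' < s k := by omega
      exact hsm.lt_iff_lt.1 this
    have hlt2 : k < k' + 1 := by
      have : s k < s (k' + 1) := by omega
      exact hsm.lt_iff_lt.1 this
    omega
  · intro m
    have := hyv (m - t 0)
    rw [htl (m - t 0)] at this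
    rw [show t 0 + (m - t 0) = m by ring] at this
    exact this

/-- Structure extracted from an expansion `a ↦ a·dia` of a point `y`. -/
lemma expansion_structure {a dia : ℕ} {y z : Point}
    (hr : ReplacedBy [a] [a, dia] y z) :
    ∃ s' t' : ℤ → ℤ,
      (∀ k, s' k = s' 0 + k) ∧
      (∀ k, t' (k + 1) = if y (s' k) = a then t' k + 2 else t' k + 1) ∧
      (∀ m, ∃ k, t' k ≤ m ∧ m < t' (k + 1)) ∧
      (∀ k, y (s' k) = a → z (t' k) = a ∧ z (t' k + 1) = dia) ∧
      (∀ k, y (s' k) ≠ a → z (t' k) = y (s' k)) := by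
  obtain ⟨-, s', t', hmatch, hcov, hblk⟩ := hr
  have matchIff : ∀ i, MatchesAt [a] y i ↔ y i = a := fun i => matchesAt_single
  have hs' : ∀ k, s' (k + 1) = s' k + 1 := by
    intro k
    by_cases hM : MatchesAt [a] y (s' k)
    · have := ((hblk k).1 hM).1; simpa using this
    · exact ((hblk k).2 hM).1
  refine ⟨s', t', zlinear s' hs', ?_, hcov, ?_, ?_⟩
  · intro k
    by_cases hM : y (s' k) = a
    · rw [if_pos hM]
      have := ((hblk k).1 ((matchIff _).2 hM)).2.1; simpa using this
    · rw [if_neg hM]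
      exact ((hblk k).2 (fun hM' => hM ((matchIff _).1 hM'))).2.1
  · intro k hM
    have h0 := ((hblk k).1 ((matchIff _).2 hM)).2.2 ⟨0, by norm_num⟩
    have h1 := ((hblk k).1 ((matchIff _).2 hM)).2.2 ⟨1, by norm_num⟩
    exact ⟨by simpa using h0, by simpa using h1⟩
  · intro k hM
    exact ((hblk k).2 (fun hM' => hM ((matchIff _).1 hM'))).2.2

/-- The canonical contraction along a block enumeration witnesses `ReplacedBy`. -/
lemma canonical_contraction {a b : ℕ} (hab : a ≠ b) {x : Point}
    (hx : ∀ i, x i = a → x (i + 1) = b) {s : ℤ → ℤ}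
    (hbs : ∀ k, x (s k - 1) ≠ a)
    (hstep : ∀ k, s (k + 1) = if x (s k) = a then s k + 2 else s k + 1) :
    ReplacedBy [a, b] [a] x (fun k => x (s k)) := by
  refine ⟨by simp, s, fun k => k, ?_, ?_, ?_⟩
  · intro i hM
    have hia : x i = a := (matchesAt_pair.1 hM).1
    refine blockSeq_surj hstep i ?_
    intro hcon
    have := hx (i - 1) hcon
    rw [show i - 1 + 1 = i by ring] at this
    rw [this] at hia
    exact hab hia.symm
  · intro m; exact ⟨m, le_refl m, lt_add_one m⟩
  · intro k
    constructor
    · intro hM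
      have hxa : x (s k) = a := (matchesAt_pair.1 hM).1
      refine ⟨by simp [hstep k, hxa], by norm_num, ?_⟩
      intro j; fin_cases j; simpa using hxa
    · intro hM
      have hxa : x (s k) ≠ a := fun hc => hM (matchesAt_pair.2 ⟨hc, hx _ hc⟩)
      exact ⟨by simp [hstep k, hxa], by norm_num, rfl⟩

/-- The canonical expansion from the contracted point back to `phi x`. -/
lemma canonical_expansion {a b dia : ℕ} (hab : a ≠ b) {x : Point}
    (hx : ∀ i, x i = a → x (i + 1) = b) {s : ℤ → ℤ}
    (hbs : ∀ k, x (s k - 1) ≠ a)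
    (hstep : ∀ k, s (k + 1) = if x (s k) = a then s k + 2 else s k + 1) :
    ReplacedBy [a] [a, dia] (fun k => x (s k)) (phi a b dia x) := by
  refine ⟨by simp, fun k => k, s, ?_, ?_, ?_⟩
  · intro i _; exact ⟨i, rfl⟩
  · intro m; exact zcover s (blockSeq_lt hstep) m
  · intro k
    constructor
    · intro hM
      have hxa : x (s k) = a := by simpa using (matchesAt_single.1 hM)
      refine ⟨by norm_num, by simp [hstep k, hxa], ?_⟩
      intro j; fin_cases j
      · show phi a b dia x (s k + 0) = a
        unfold phi
        rw [if_neg (fun hc : x (s k + 0 - 1) = a ∧ x (s k + 0) = b => by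
          rw [show s k + 0 = s k by ring] at hc
          exact hab (hxa ▸ hc.2 ▸ rfl))]
        rw [show s k + 0 = s k by ring]
        exact hxa
      · show phi a b dia x (s k + 1) = dia
        unfold phi
        rw [if_pos ⟨by rw [show s k + 1 - 1 = s k by ring]; exact hxa, hx _ hxa⟩]
    · intro hM
      have hxa : x (s k) ≠ a := by
        intro hc; exact hM (matchesAt_single.2 (by simpa using hc))
      refine ⟨by norm_num, by simp [hstep k, hxa], ?_⟩
      show phi a b dia x (s k) = x (s k)
      unfold phi
      rw [if_neg (fun hc => hbs k hc.1)]

/-- Forbidden words for the recoded shift, coming from `F`. -/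
def Fp (b dia : ℕ) (F : Set (List ℕ)) : Set (List ℕ) :=
  { w' | ∃ w ∈ F, List.Forall₂ (fun c' c => (if c' = dia then b else c') = c) w' w }

/-- Forbidden words enforcing `z (i+1) = dia ↔ z i = a`. -/
def FsyncSet (a dia : ℕ) : Set (List ℕ) :=
  { w | ∃ c d : ℕ, w = [c, d] ∧ ((c = a ∧ d ≠ dia) ∨ (c ≠ a ∧ d = dia)) }

lemma psi_matches {b dia : ℕ} {z : Point} {w : List ℕ} {i : ℤ} :
    MatchesAt w (psi b dia z) i ↔
      ∃ w', List.Forall₂ (fun c' c => (if c' = dia then b else c') = c) w' w ∧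
        MatchesAt w' z i := by
  constructor
  · intro hm
    refine ⟨List.ofFn (fun j : Fin w.length => z (i + (j : ℕ))), ?_, ?_⟩
    · rw [List.forall₂_iff_get]
      refine ⟨by simp, ?_⟩
      intro n h1 h2
      simp only [List.get_ofFn]
      have := hm ⟨n, h2⟩
      simpa [psi] using this
    · intro j
      have hj : (j : ℕ) < w.length := by
        have := j.2; simpa using this
      simp [List.get_ofFn]
  · rintro ⟨w', hrel, hm⟩ j
    have hlen : w'.length = w.length := hrel.length_eq
    have hj' : (j : ℕ) < w'.length := by rw [hlen]; exact j.2
    have := hm ⟨(j : ℕ), hj'⟩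
    have hrg := (List.forall₂_iff_get.1 hrel).2 (j : ℕ) hj' j.2
    simp only [psi]
    rw [this]
    simpa using hrg

lemma phi_image_eq {A : Set ℕ} {F : Set (List ℕ)} {a b dia : ℕ}
    (ha : a ∈ A) (hb : b ∈ A) (hab : a ≠ b) (hdia : dia ∉ A)
    (h : ∀ x ∈ XF A F, ∀ i : ℤ, x i = a → x (i + 1) = b) :
    phi a b dia '' XF A F = XF (insert dia A) (Fp b dia F ∪ FsyncSet a dia) := by
  have hadia : a ≠ dia := fun hc => hdia (hc ▸ ha)
  have hbdia : b ≠ dia := fun hc => hdia (hc ▸ hb)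
  have hnodia : ∀ x ∈ XF A F, ∀ i : ℤ, x i ≠ dia := by
    intro x hx i hc; exact hdia (hc ▸ hx.1 i)
  have phiA : ∀ x ∈ XF A F, ∀ i, phi a b dia x i = a ↔ x i = a := by
    intro x hx i
    unfold phi
    by_cases hc : x (i - 1) = a ∧ x i = b
    · rw [if_pos hc]
      constructor
      · intro hc'; exact absurd hc'.symm hadia
      · intro hc'; exact absurd (hc'.symm.trans hc.2) hab
    · rw [if_neg hc]
  have phiDia : ∀ x ∈ XF A F, ∀ i, phi a b dia x (i + 1) = dia ↔ x i = a := by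
    intro x hx i
    unfold phi
    by_cases hc : x (i + 1 - 1) = a ∧ x (i + 1) = b
    · rw [if_pos hc]
      rw [show i + 1 - 1 = i by ring] at hc
      simp [hc.1]
    · rw [if_neg hc]
      constructor
      · intro hc'; exact absurd hc' (hnodia x hx _)
      · intro hc'
        exfalso; apply hc
        rw [show i + 1 - 1 = i by ring]
        exact ⟨hc', h x hx i hc'⟩
  ext z
  constructor
  · rintro ⟨x, hxX, rfl⟩
    refine ⟨?_, ?_⟩
    · intro i
      unfold phi
      by_cases hc : x (i - 1) = a ∧ x i = b
      · rw [if_pos hc]; exact Set.mem_insert _ _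
      · rw [if_neg hc]; exact Set.mem_insert_iff.2 (Or.inr (hxX.1 i))
    · rintro w (hw | hw) ⟨i, hm⟩
      · obtain ⟨w0, hw0F, hrel⟩ := hw
        have : MatchesAt w0 (psi b dia (phi a b dia x)) i :=
          psi_matches.2 ⟨w, hrel, hm⟩
        rw [psi_phi (hnodia x hxX)] at this
        exact hxX.2 w0 hw0F ⟨i, this⟩
      · obtain ⟨c, d, rfl, hcd⟩ := hw
        obtain ⟨h0, h1⟩ := matchesAt_pair.1 hm
        rcases hcd with ⟨hca, hdd⟩ | ⟨hca, hdd⟩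
        · have hxa : x i = a := (phiA x hxX i).1 (hca ▸ h0)
          exact hdd (h1 ▸ (phiDia x hxX i).2 hxa)
        · have hxa : x i = a := (phiDia x hxX i).1 (hdd ▸ h1)
          exact hca (h0.symm.trans ((phiA x hxX i).2 hxa))
  · intro hz
    set x := psi b dia z with hxdef
    have hiff : ∀ i, z (i + 1) = dia ↔ z i = a := by
      intro i
      have hno : ¬ ((z i = a ∧ z (i + 1) ≠ dia) ∨ (z i ≠ a ∧ z (i + 1) = dia)) := by
        intro hcon
        exact hz.2 [z i, z (i + 1)] (Or.inr ⟨z i, z (i + 1), rfl, hcon⟩)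
          ⟨i, matchesAt_pair.2 ⟨rfl, rfl⟩⟩
      by_cases h1 : z i = a <;> by_cases h2 : z (i + 1) = dia <;> tauto
    have hxA : ∀ i, x i ∈ A := by
      intro i
      rcases Set.mem_insert_iff.1 (hz.1 i) with hc | hc
      · simp only [hxdef, psi, if_pos hc]; exact hb
      · have : z i ≠ dia := fun hd => hdia (hd ▸ hc)
        simp only [hxdef, psi, if_neg this]; exact hc
    have hzx : ∀ i, z i ≠ dia → x i = z i := by
      intro i hi; simp only [hxdef, psi, if_neg hi]
    have hxX : x ∈ XF A F := by
      refine ⟨hxA, ?_⟩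
      rintro w0 hw0 ⟨i, hm⟩
      obtain ⟨w', hrel, hm'⟩ := psi_matches.1 hm
      exact hz.2 w' (Or.inl ⟨w0, hw0, hrel⟩) ⟨i, hm'⟩
    refine ⟨x, hxX, ?_⟩
    funext i
    by_cases hzd : z i = dia
    · have hz1 : z (i - 1) = a := by
        have := hiff (i - 1)
        rw [show i - 1 + 1 = i by ring] at this
        exact this.1 hzd
      have hx1 : x (i - 1) = a := by
        rw [hzx (i - 1) (fun hd => hadia (hz1 ▸ hd ▸ rfl))]
        exact hz1
      have hx0 : x i = b := by simp only [hxdef, psi, if_pos hzd]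
      unfold phi
      rw [if_pos ⟨hx1, hx0⟩, hzd]
    · have hx0 : x i = z i := hzx i hzd
      unfold phi
      rw [if_neg ?_, hx0]
      rintro ⟨hc1, hc2⟩
      have hz1 : z (i - 1) = a := by
        by_cases hd : z (i - 1) = dia
        · exfalso
          have : x (i - 1) = b := by simp only [hxdef, psi, if_pos hd]
          exact hab (hc1.symm.trans this)
        · rw [hzx (i - 1) hd] at hc1; exact hc1
      have := (hiff (i - 1)).2 hz1
      rw [show i - 1 + 1 = i by ring] at this
      exact hzd this

/-- An integer-indexed partial-sum sequence for block lengths. -/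
lemma exists_T (z : Point) (a : ℕ) :
    ∃ T : ℤ → ℤ, T 0 = 0 ∧ ∀ k, T (k + 1) = T k + (if z k = a then 2 else 1) := by
  classical
  obtain ⟨u, hu0, -, hustep⟩ := zseq
    (fun p : ℤ × ℤ => (p.1 + 1, p.2 + (if z p.1 = a then 2 else 1)))
    (fun p : ℤ × ℤ => (p.1 - 1, p.2 - (if z (p.1 - 1) = a then 2 else 1)))
    (fun _ => True)
    (fun _ _ => trivial) (fun _ _ => trivial)
    (by
      intro p _
      refine Prod.ext (by simp) (by simp))
    ((0 : ℤ), (0 : ℤ)) trivial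
  have hfst : ∀ k, (u k).1 = k := by
    intro k
    induction k using Int.induction_on with
    | zero => rw [hu0]
    | succ n ih => rw [hustep n]; simpa using ih
    | pred n ih =>
      have := hustep (-(n : ℤ) - 1)
      rw [show (-(n:ℤ) - 1 + 1) = -(n:ℤ) by ring] at this
      have h2 : (u (-(n:ℤ))).1 = (u (-(n:ℤ) - 1)).1 + 1 := by rw [this]
      push_cast
      omega
  refine ⟨fun k => (u k).2, by simp [hu0], ?_⟩
  intro k
  have := hustep k
  have h2 : (u (k + 1)).2 = (u k).2 + (if z ((u k).1) = a then 2 else 1) := by rw [this]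
  rw [hfst k] at h2
  exact h2

open Classical in
/-- The canonical expansion of a candidate contracted point. -/
noncomputable def expandPt (z : Point) (b : ℕ) (T : ℤ → ℤ) : Point :=
  fun i => if hi : ∃ k, T k = i then z (Classical.choose hi) else b

lemma expandPt_T {z : Point} {b : ℕ} {T : ℤ → ℤ} (hTinj : Function.Injective T) (k : ℤ) :
    expandPt z b T (T k) = z k := by
  unfold expandPt
  rw [dif_pos ⟨k, rfl⟩]
  congr 1
  exact hTinj (Classical.choose_spec (⟨k, rfl⟩ : ∃ k', T k' = T k))

lemma expandPt_not {z : Point} {b : ℕ} {T : ℤ → ℤ} {i : ℤ} (hi : ¬ ∃ k, T k = i) :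
    expandPt z b T i = b := by
  unfold expandPt
  exact dif_neg hi

/-- The contraction `X^{ab ↦ a}` of an `XF`-shift is again an `XF`-shift. -/
lemma contraction_eq_XF {A : Set ℕ} {F : Set (List ℕ)} {a b : ℕ}
    (ha : a ∈ A) (hb : b ∈ A) (hab : a ≠ b)
    (hprop : ∀ x ∈ XF A F, ∀ i : ℤ, x i = a → x (i + 1) = b) :
    ReplaceWord [a, b] [a] (XF A F) =
      XF A { w | ¬ ∃ y ∈ ReplaceWord [a, b] [a] (XF A F), occursIn w y } := by
  classical
  set Y := ReplaceWord [a, b] [a] (XF A F) with hYdef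
  ext z
  constructor
  · rintro ⟨x, hxX, hr⟩
    obtain ⟨s, hstep, hbs, c, hyx⟩ := contraction_structure hab (hprop x hxX) hr
    refine ⟨?_, ?_⟩
    · intro i; rw [hyx i]; exact hxX.1 _
    · rintro w hw ⟨i, hm⟩
      exact hw ⟨z, ⟨x, hxX, hr⟩, ⟨i, hm⟩⟩
  · intro hz
    obtain ⟨T, hT0, hTstep⟩ := exists_T z a
    have hTlt : ∀ k, T k < T (k + 1) := by
      intro k; have := hTstep k; by_cases hc : z k = a <;> simp [hc] at this <;> omega
    have hTmono : StrictMono T := strictMono_int_of_lt_succ hTlt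
    have hTinj : Function.Injective T := hTmono.injective
    have hTge : ∀ (k : ℤ) (n : ℕ), T k + n ≤ T (k + n) := by
      intro k n
      induction n with
      | zero => simp
      | succ n ih =>
        have := hTlt (k + n)
        have hc : (k + (n + 1 : ℕ) : ℤ) = (k + n) + 1 := by push_cast; ring
        rw [hc]; push_cast at ih ⊢; omega
    set x : Point := expandPt z b T with hxdef
    have hxT : ∀ k, x (T k) = z k := fun k => expandPt_T hTinj k
    have hnotT1 : ∀ k, z k = a → ¬ ∃ k', T k' = T k + 1 := by
      rintro k hzk ⟨k', hk'⟩
      have h2 : T (k + 1) = T k + 2 := by rw [hTstep k, if_pos hzk]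
      have h3 : k < k' := hTmono.lt_iff_lt.1 (by omega)
      have h4 : k' < k + 1 := hTmono.lt_iff_lt.1 (by omega)
      omega
    have hxT1 : ∀ k, z k = a → x (T k + 1) = b := by
      intro k hzk
      exact expandPt_not (hnotT1 k hzk)
    have hblocks : ∀ i : ℤ, ∃ k, T k = i ∨ (T k + 1 = i ∧ z k = a) := by
      intro i
      obtain ⟨k, hk1, hk2⟩ := zcover T hTlt i
      refine ⟨k, ?_⟩
      have := hTstep k
      by_cases hc : z k = a
      · rw [if_pos hc] at this
        rcases (by omega : T k = i ∨ T k + 1 = i) with h | h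
        · exact Or.inl h
        · exact Or.inr ⟨h, hc⟩
      · rw [if_neg hc] at this; left; omega
    have hxA : ∀ i, x i ∈ A := by
      intro i
      obtain ⟨k, hk | hk⟩ := hblocks i
      · rw [← hk, hxT]; exact hz.1 k
      · rw [← hk.1, hxT1 k hk.2]; exact hb
    -- x avoids every forbidden word of F
    have hxF : ∀ w ∈ F, ¬ occursIn w x := by
      rintro w hwF ⟨i, hmw⟩
      set L := w.length with hLdef
      obtain ⟨j, hj1, hj2⟩ := zcover T hTlt i
      obtain ⟨v, hvlen, hvget⟩ :
          ∃ v : List ℕ, v.length = L + 2 ∧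
            ∀ (n : ℕ) (hn : n < v.length), v.get ⟨n, hn⟩ = z (j + (n : ℤ)) := by
        refine ⟨List.ofFn (fun n : Fin (L + 2) => z (j + (n : ℕ))), List.length_ofFn, ?_⟩
        intro n hn
        rw [List.get_ofFn]
        simp
      have hmv : MatchesAt v z j := fun n => (hvget (n : ℕ) n.2).symm
      have hvY : ∃ y ∈ Y, occursIn v y := by
        by_contra hcon
        exact hz.2 v hcon ⟨j, hmv⟩
      obtain ⟨y, ⟨x', hx'X, hr'⟩, ⟨m, hmy⟩⟩ := hvY
      obtain ⟨s', hstep', hbs', c, hyx'⟩ := contraction_structure hab (hprop x' hx'X) hr'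
      set q := m - c with hqdef
      have hval : ∀ n : ℕ, n < L + 2 → x' (s' (q + n)) = z (j + n) := by
        intro n hn
        have hnv : n < v.length := by omega
        have h1 := hmy ⟨n, hnv⟩
        have h2 : y (m + n) = z (j + n) := by
          rw [h1, hvget n hnv]
        have h3 := hyx' (m + n)
        rw [show m + (n : ℤ) - c = q + n by omega] at h3
        rw [← h3, h2]
      have claim1 : ∀ n : ℕ, n ≤ L + 2 → s' (q + n) = s' q + (T (j + n) - T j) := by
        intro n hn
        induction n with
        | zero => simp
        | succ n ih =>
          have hn' : n < L + 2 := by omega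
          have ih' := ih (by omega)
          have hxv := hval n hn'
          have hs := hstep' (q + n)
          have hT := hTstep (j + n)
          have hc1 : (q + ((n + 1 : ℕ) : ℤ)) = (q + n) + 1 := by push_cast; ring
          have hc2 : (j + ((n + 1 : ℕ) : ℤ)) = (j + n) + 1 := by push_cast; ring
          rw [hc1, hc2, hs, hT, hxv]
          by_cases hc : z (j + n) = a <;> simp [hc] <;> omega
      have claim2 : ∀ p : ℤ, T j ≤ p → p < T (j + ((L + 2 : ℕ) : ℤ)) →
          x p = x' (p - T j + s' q) := by
        intro p hp1 hp2
        obtain ⟨k, hk1, hk2⟩ := zcover T hTlt p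
        have hjk : j ≤ k := by
          by_contra hcon
          have : T (k + 1) ≤ T j := hTmono.monotone (by omega)
          omega
        have hkj : k < j + (L + 2 : ℕ) := by
          by_contra hcon
          have : T (j + ((L + 2 : ℕ) : ℤ)) ≤ T k := hTmono.monotone (by omega)
          omega
        set n : ℕ := (k - j).toNat with hndef
        have hkn : k = j + n := by omega
        have hn2 : n < L + 2 := by omega
        have hs'n : s' (q + n) = s' q + (T k - T j) := by
          rw [claim1 n (by omega), ← hkn]
        have hvn : x' (s' (q + n)) = z k := by rw [hval n hn2, ← hkn]
        have hT := hTstep k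
        by_cases hc : z k = a
        · rw [if_pos hc] at hT
          rcases (by omega : p = T k ∨ p = T k + 1) with hp | hp
          · rw [hp, hxT k]
            rw [show T k - T j + s' q = s' (q + n) by omega]
            rw [hvn]
          · rw [hp, hxT1 k hc]
            rw [show T k + 1 - T j + s' q = s' (q + n) + 1 by omega]
            have := hprop x' hx'X (s' (q + n)) (by rw [hvn]; exact hc)
            rw [this]
        · rw [if_neg hc] at hT
          have hp : p = T k := by omega
          rw [hp, hxT k]
          rw [show T k - T j + s' q = s' (q + n) by omega]
          rw [hvn]
      have hocc : MatchesAt w x' (i - T j + s' q) := by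
        intro jj
        have h1 := hmw jj
        have hjj : (jj : ℕ) < L := jj.2
        have h2 : x (i + jj) = x' ((i + jj) - T j + s' q) := by
          refine claim2 (i + jj) (by omega) ?_
          have h3 := hTge (j + 1) (L + 1)
          have h4 : (j + 1 + ((L + 1 : ℕ) : ℤ)) = j + ((L + 2 : ℕ) : ℤ) := by push_cast; ring
          rw [h4] at h3
          push_cast at h3 ⊢
          omega
        rw [show i - T j + s' q + jj = (i + jj) - T j + s' q by ring, ← h2, h1]
      exact hx'X.2 w hwF ⟨i - T j + s' q, hocc⟩
    -- z is the contraction of x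
    refine ⟨x, ⟨hxA, hxF⟩, ?_, T, fun k => k, ?_, ?_, ?_⟩
    · simp
    · intro i hM
      have hia : x i = a := (matchesAt_pair.1 hM).1
      obtain ⟨k, hk | hk⟩ := hblocks i
      · exact ⟨k, hk⟩
      · exfalso
        rw [← hk.1] at hia
        rw [hxT1 k hk.2] at hia
        exact hab hia.symm
    · intro m; exact ⟨m, le_refl m, lt_add_one m⟩
    · intro k
      by_cases hzk : z k = a
      · constructor
        · intro _
          refine ⟨by simp [hTstep k, hzk], by norm_num, ?_⟩
          intro j; fin_cases j; simpa using hzk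
        · intro hnM
          exact absurd (matchesAt_pair.2 ⟨hxT k ▸ hzk, hxT1 k hzk⟩) hnM
      · constructor
        · intro hM
          have := (matchesAt_pair.1 hM).1
          rw [hxT k] at this
          exact absurd this hzk
        · intro _
          exact ⟨by simp [hTstep k, hzk], by norm_num, (hxT k).symm⟩

lemma phi_image_eq_replace {A : Set ℕ} {F : Set (List ℕ)} {a b dia : ℕ}
    (hab : a ≠ b)
    (hprop : ∀ x ∈ XF A F, ∀ i : ℤ, x i = a → x (i + 1) = b) :
    phi a b dia '' XF A F =
      ReplaceWord [a] [a, dia] (ReplaceWord [a, b] [a] (XF A F)) := by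
  ext z
  constructor
  · rintro ⟨x, hxX, rfl⟩
    have hx := hprop x hxX
    have hi0 : x ((if x (-1) = a then (-1 : ℤ) else 0) - 1) ≠ a := by
      by_cases hc : x (-1) = a
      · rw [if_pos hc]
        intro hcon
        have := hx (-1 - 1 : ℤ) hcon
        rw [show (-1 - 1 + 1 : ℤ) = -1 by ring] at this
        rw [this] at hc
        exact hab hc.symm
      · rw [if_neg hc]
        simpa using hc
    obtain ⟨s, hs0, hbs, hstep⟩ := exists_blockSeq hab x hx _ hi0
    exact ⟨fun k => x (s k), ⟨x, hxX, canonical_contraction hab hx hbs hstep⟩,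
      canonical_expansion hab hx hbs hstep⟩
  · rintro ⟨y, ⟨x, hxX, hr⟩, hr2⟩
    have hx := hprop x hxX
    obtain ⟨s, hstep, hbs, c, hyx⟩ := contraction_structure hab hx hr
    obtain ⟨s', t', hs'lin, ht'step, ht'cov, hzmatch, hznon⟩ := expansion_structure hr2
    set S : ℤ → ℤ := fun k => s (s' 0 - c + k) with hSdef
    have hyS : ∀ k, y (s' k) = x (S k) := by
      intro k
      rw [hs'lin k, hyx (s' 0 + k), hSdef]
      rw [show s' 0 + k - c = s' 0 - c + k by ring]
    have hSstep : ∀ k, S (k + 1) = if x (S k) = a then S k + 2 else S k + 1 := by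
      intro k
      have := hstep (s' 0 - c + k)
      simp only [hSdef]
      rw [show s' 0 - c + (k + 1) = s' 0 - c + k + 1 by ring]
      exact this
    have hSbs : ∀ k, x (S k - 1) ≠ a := fun k => hbs _
    have ht'step2 : ∀ k, t' (k + 1) = if x (S k) = a then t' k + 2 else t' k + 1 := by
      intro k
      rw [ht'step k, hyS k]
    set e : ℤ := t' 0 - S 0 with hedef
    have hte : ∀ k, t' k = S k + e := by
      intro k
      induction k using Int.induction_on with
      | zero => omega
      | succ n ih =>
        have h1 := ht'step2 n
        have h2 := hSstep n
        by_cases hc : x (S n) = a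
        · rw [if_pos hc] at h1 h2; omega
        · rw [if_neg hc] at h1 h2; omega
      | pred n ih =>
        have h1 := ht'step2 (-(n : ℤ) - 1)
        have h2 := hSstep (-(n : ℤ) - 1)
        rw [show (-(n:ℤ) - 1 + 1) = -(n:ℤ) by ring] at h1 h2
        by_cases hc : x (S (-(n:ℤ) - 1)) = a
        · rw [if_pos hc] at h1 h2; omega
        · rw [if_neg hc] at h1 h2; omega
    set x'' : Point := fun i => x (i + (-e)) with hx''def
    have hx''v : ∀ p : ℤ, x'' (p + e) = x p := by
      intro p
      simp only [hx''def]
      rw [show p + e + (-e) = p by ring]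
    have hx''X : x'' ∈ XF A F := XF_translate hxX (-e)
    refine ⟨x'', hx''X, ?_⟩
    funext i
    obtain ⟨k, hk1, hk2⟩ := ht'cov i
    have htk := hte k
    by_cases hA : x (S k) = a
    · have hstep2 : t' (k + 1) = t' k + 2 := by rw [ht'step2 k, if_pos hA]
      have hya : y (s' k) = a := by rw [hyS k]; exact hA
      rcases (by omega : i = S k + e ∨ i = S k + e + 1) with hi | hi
      · subst hi
        have hz1 : z (S k + e) = a := by
          have := (hzmatch k hya).1
          rwa [htk] at this
        have hcond : ¬ (x'' (S k + e - 1) = a ∧ x'' (S k + e) = b) := by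
          rintro ⟨-, hc2⟩
          rw [hx''v (S k)] at hc2
          exact hab (hA.symm.trans hc2)
        show (if x'' (S k + e - 1) = a ∧ x'' (S k + e) = b then dia else x'' (S k + e))
            = z (S k + e)
        rw [if_neg hcond, hx''v (S k), hz1]
        exact hA
      · subst hi
        have hz1 : z (S k + e + 1) = dia := by
          have := (hzmatch k hya).2
          rwa [htk] at this
        have hc1 : x'' (S k + e + 1 - 1) = a := by
          rw [show S k + e + 1 - 1 = S k + e by ring, hx''v (S k)]
          exact hA
        have hc2 : x'' (S k + e + 1) = b := by
          rw [show S k + e + 1 = (S k + 1) + e by ring, hx''v (S k + 1)]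
          exact hx _ hA
        show (if x'' (S k + e + 1 - 1) = a ∧ x'' (S k + e + 1) = b then dia
            else x'' (S k + e + 1)) = z (S k + e + 1)
        rw [if_pos ⟨hc1, hc2⟩, hz1]
    · have hstep2 : t' (k + 1) = t' k + 1 := by rw [ht'step2 k, if_neg hA]
      have hya : y (s' k) ≠ a := by rw [hyS k]; exact hA
      have hi : i = S k + e := by omega
      subst hi
      have hz1 : z (S k + e) = x (S k) := by
        have := hznon k hya
        rw [htk, hyS k] at this
        exact this
      have hcond : ¬ (x'' (S k + e - 1) = a ∧ x'' (S k + e) = b) := by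
        rintro ⟨hc1, -⟩
        rw [show S k + e - 1 = (S k - 1) + e by ring, hx''v (S k - 1)] at hc1
        exact hSbs k hc1
      show (if x'' (S k + e - 1) = a ∧ x'' (S k + e) = b then dia else x'' (S k + e))
          = z (S k + e)
      rw [if_neg hcond, hx''v (S k), hz1]

end Aux

/-- If in every point of `X` the letter `a` is always followed by `b`,
then `X` is flow equivalent to `X^{ab ↦ a}`. -/
theorem stmt2 (X : Set Point) (A : Set ℕ) (hA : A.Finite)
    (hX : ∃ F : Set (List ℕ), X = XF A F)
    (a b : ℕ) (ha : a ∈ A) (hb : b ∈ A) (hab : a ≠ b)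
    (h : ∀ x ∈ X, ∀ i : ℤ, x i = a → x (i + 1) = b) :
    FlowEquiv X (ReplaceWord [a, b] [a] X) := by
  classical
  obtain ⟨F, rfl⟩ := hX
  by_cases haX : ∃ x ∈ XF A F, ∃ i : ℤ, x i = a
  · -- main case: `a` occurs somewhere
    obtain ⟨dia, hdia⟩ := hA.infinite_compl.nonempty
    have hdia' : dia ∉ A := hdia
    have hZXF := phi_image_eq (F := F) ha hb hab hdia' h
    have hYXF := contraction_eq_XF (F := F) ha hb hab h
    have hZrep := phi_image_eq_replace (F := F) (dia := dia) hab h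
    have hssX : IsShiftSpace (XF A F) := ⟨A, hA, F, rfl⟩
    have hssZ : IsShiftSpace (phi a b dia '' XF A F) :=
      ⟨insert dia A, hA.insert dia, _, hZXF⟩
    have hssY : IsShiftSpace (ReplaceWord [a, b] [a] (XF A F)) := ⟨A, hA, _, hYXF⟩
    have hnodia : ∀ x ∈ XF A F, ∀ i : ℤ, x i ≠ dia := by
      intro x hx i hc; exact hdia' (hc ▸ hx.1 i)
    have hconj : Conjugate (XF A F) (phi a b dia '' XF A F) := by
      refine ⟨phi a b dia, ⟨Set.mapsTo_image _ _, 1, 0,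
        fun l => if l = [a, b] then dia else l.getD 1 0, ?_⟩, ?_⟩
      · intro x hx i
        have hofn : (List.ofFn fun j : Fin (1 + 0 + 1) => x (i - (1 : ℕ) + ((j : ℕ) : ℤ)))
            = [x (i - 1), x i] := by
          simp [List.ofFn_succ]
        rw [hofn]
        show phi a b dia x i =
          if [x (i - 1), x i] = [a, b] then dia else [x (i - 1), x i].getD 1 0
        unfold phi
        by_cases hc : x (i - 1) = a ∧ x i = b
        · rw [if_pos hc, if_pos (by rw [hc.1, hc.2])]
        · rw [if_neg hc, if_neg ?_]
          · simp
          · intro hcon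
            apply hc
            have h1 : x (i - 1) = a := by
              have := congrArg (fun l : List ℕ => l.getD 0 0) hcon
              simpa using this
            have h2 : x i = b := by
              have := congrArg (fun l : List ℕ => l.getD 1 0) hcon
              simpa using this
            exact ⟨h1, h2⟩
      · refine Set.InjOn.bijOn_image ?_
        intro x1 h1 x2 h2 he
        have := congrArg (psi b dia) he
        rwa [psi_phi (hnodia x1 h1), psi_phi (hnodia x2 h2)] at this
    have hsymb : IsSymbolExpansionOf (phi a b dia '' XF A F)
        (ReplaceWord [a, b] [a] (XF A F)) := by
      refine ⟨a, dia, ?_, ?_, hZrep⟩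
      · -- a occurs in the contraction
        obtain ⟨x1, hx1, i1, hx1a⟩ := haX
        have hx1p := h x1 hx1
        have hbs1 : x1 (i1 - 1) ≠ a := by
          intro hcon
          have := hx1p (i1 - 1) hcon
          rw [show i1 - 1 + 1 = i1 by ring] at this
          rw [this] at hx1a
          exact hab hx1a.symm
        obtain ⟨s, hs0, hbs, hstep⟩ := exists_blockSeq hab x1 hx1p i1 hbs1
        refine ⟨fun k => x1 (s k), ⟨x1, hx1, canonical_contraction hab hx1p hbs hstep⟩,
          0, ?_⟩
        show x1 (s 0) = a
        rw [hs0]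
        exact hx1a
      · rintro ⟨y, hyY, i, hyi⟩
        have : y ∈ XF A _ := hYXF ▸ hyY
        exact hdia' (hyi ▸ this.1 i)
    have step1 : FEStep (XF A F) (phi a b dia '' XF A F) := ⟨hssX, hssZ, Or.inl hconj⟩
    have step2 : FEStep (phi a b dia '' XF A F) (ReplaceWord [a, b] [a] (XF A F)) :=
      ⟨hssZ, hssY, Or.inr (Or.inr (Or.inr hsymb))⟩
    exact Relation.ReflTransGen.head step1 (Relation.ReflTransGen.single step2)
  · -- degenerate case: `a` never occurs, so the contraction is `X` itself
    have hnoa : ∀ x ∈ XF A F, ∀ i : ℤ, x i ≠ a := by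
      intro x hx i hc; exact haX ⟨x, hx, i, hc⟩
    have hY : ReplaceWord [a, b] [a] (XF A F) = XF A F := by
      ext z
      constructor
      · rintro ⟨x, hxX, -, s, t, hmatch, hcov, hblk⟩
        have hnM : ∀ k, ¬ MatchesAt [a, b] x (s k) := by
          intro k hM
          exact hnoa x hxX _ (matchesAt_pair.1 hM).1
        have hs : ∀ k, s (k + 1) = s k + 1 := fun k => ((hblk k).2 (hnM k)).1
        have ht : ∀ k, t (k + 1) = t k + 1 := fun k => ((hblk k).2 (hnM k)).2.1
        have hy : ∀ k, z (t k) = x (s k) := fun k => ((hblk k).2 (hnM k)).2.2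
        have hslin := zlinear s hs
        have htlin := zlinear t ht
        have hval : ∀ m : ℤ, z m = x (m + (s 0 - t 0)) := by
          intro m
          obtain ⟨k, hk1, hk2⟩ := hcov m
          have e1 := htlin k
          have e2 := htlin (k + 1)
          have hmk : m = t k := by omega
          rw [hmk, hy k, hslin k]
          congr 1
          omega
        have : z = fun i => x (i + (s 0 - t 0)) := funext hval
        rw [this]
        exact XF_translate hxX _
      · intro hxX
        refine ⟨z, hxX, by simp, fun k => k, fun k => k, ?_, ?_, ?_⟩
        · intro i hM
          exact absurd (matchesAt_pair.1 hM).1 (hnoa z hxX i)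
        · intro m; exact ⟨m, le_refl m, lt_add_one m⟩
        · intro k
          constructor
          · intro hM
            exact absurd (matchesAt_pair.1 hM).1 (hnoa z hxX k)
          · intro _
            exact ⟨by norm_num, by norm_num, rfl⟩
    rw [hY]
    exact Relation.ReflTransGen.refl

end SymbDyn
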